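/- Let G be a simple graph on n vertices. Then mcut(G) ≤ (n/4)·s_A(G), where s_A(G) = λ_1(G) - λ_n(G) is the spread of the adjacency matrix. -/

import Mathlib

/-!
Test the Rayleigh quotient of the adjacency matrix `A` twice: the all-ones vector gives
`𝟙 ⬝ A 𝟙 ≤ n λ₁`, and the `±1` vector `p` of a vertex set `S` gives `p ⬝ A p ≥ n λₙ`.
Every edge contributes `0` to `𝟙 ⬝ A 𝟙 - p ⬝ A p` unless it crosses the cut of `S`, when it
contributes `4` (two ordered pairs, each with `1 - p_u p_v = 2`); hence `4 cut(S) ≤ n (λ₁ - λₙ)`.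
-/

open Finset Matrix BigOperators

set_option linter.unusedSectionVars false

variable {V : Type*} [Fintype V] [DecidableEq V]

/-- Number of edges of `G` with exactly one endpoint in `S` (each unordered edge counted once,
as the ordered pair going out of `S`). -/
def cutNum (G : SimpleGraph V) [DecidableRel G.Adj] (S : Finset V) : ℕ :=
  (Finset.univ.filter (fun p : V × V => G.Adj p.1 p.2 ∧ p.1 ∈ S ∧ p.2 ∉ S)).card

/-- Number of edges of `G` with both endpoints in `S` or both outside `S`. -/
def cohNum (G : SimpleGraph V) [DecidableRel G.Adj] (S : Finset V) : ℕ :=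
  G.edgeFinset.card - cutNum G S

/-- The maximum cut of `G`. -/
def mcut (G : SimpleGraph V) [DecidableRel G.Adj] : ℕ :=
  Finset.univ.sup (fun S : Finset V => cutNum G S)

/-- The ±1 partition vector of a vertex subset `S`. -/
def pvec (S : Finset V) : V → ℝ := fun v => if v ∈ S then 1 else -1

/-- The signless Laplacian matrix `Q = D + A` of a graph. -/
def signlessLap (G : SimpleGraph V) [DecidableRel G.Adj] : Matrix V V ℝ :=
  G.degMatrix ℝ + G.adjMatrix ℝ

lemma isHermitian_adj (G : SimpleGraph V) [DecidableRel G.Adj] :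
    (G.adjMatrix ℝ).IsHermitian := by
  rw [IsHermitian, conjTranspose_eq_transpose_of_trivial]
  exact SimpleGraph.isSymm_adjMatrix G

lemma isHermitian_lap (G : SimpleGraph V) [DecidableRel G.Adj] :
    (G.lapMatrix ℝ).IsHermitian := by
  rw [IsHermitian, conjTranspose_eq_transpose_of_trivial]
  exact G.isSymm_lapMatrix ℝ

lemma isHermitian_signlessLap (G : SimpleGraph V) [DecidableRel G.Adj] :
    (signlessLap G).IsHermitian := by
  rw [IsHermitian, conjTranspose_eq_transpose_of_trivial]
  exact (G.isSymm_degMatrix ℝ).add (SimpleGraph.isSymm_adjMatrix G)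

/-- The spanning subgraph of `G` consisting of the edges between `S` and its complement. -/
def crossGraph (G : SimpleGraph V) (S : Finset V) : SimpleGraph V where
  Adj u v := G.Adj u v ∧ ((u ∈ S) ↔ (v ∉ S))
  symm := ⟨fun u v h => ⟨h.1.symm, by tauto⟩⟩
  loopless := ⟨fun v h => G.loopless.1 v h.1⟩

/-- The spanning subgraph of `G` consisting of the edges inside `S` or inside its complement. -/
def insideGraph (G : SimpleGraph V) (S : Finset V) : SimpleGraph V where
  Adj u v := G.Adj u v ∧ ((u ∈ S) ↔ (v ∈ S))
  symm := ⟨fun u v h => ⟨h.1.symm, h.2.symm⟩⟩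
  loopless := ⟨fun v h => G.loopless.1 v h.1⟩

instance (G : SimpleGraph V) [DecidableRel G.Adj] (S : Finset V) :
    DecidableRel (crossGraph G S).Adj := fun _ _ => inferInstanceAs (Decidable (_ ∧ _))

instance (G : SimpleGraph V) [DecidableRel G.Adj] (S : Finset V) :
    DecidableRel (insideGraph G S).Adj := fun _ _ => inferInstanceAs (Decidable (_ ∧ _))

/-- The second largest value (with multiplicity) of a finitely indexed family of reals. -/
noncomputable def secondLargest (f : V → ℝ) : ℝ :=
  (Multiset.sort (Finset.univ.val.map f) (· ≤ ·)).getD (Fintype.card V - 2) 0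

/-- The join of two graphs: disjoint union plus all edges in between. -/
def joinGraph {α β : Type*} (H₁ : SimpleGraph α) (H₂ : SimpleGraph β) :
    SimpleGraph (α ⊕ β) where
  Adj x y :=
    match x, y with
    | Sum.inl u, Sum.inl v => H₁.Adj u v
    | Sum.inr u, Sum.inr v => H₂.Adj u v
    | Sum.inl _, Sum.inr _ => True
    | Sum.inr _, Sum.inl _ => True
  symm := ⟨by rintro (u | u) (v | v) h <;> first | exact h.symm | trivial⟩
  loopless := ⟨by
    rintro (u | u) h
    · exact H₁.loopless.1 u h
    · exact H₂.loopless.1 u h⟩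

instance {α β : Type*} (H₁ : SimpleGraph α) (H₂ : SimpleGraph β)
    [DecidableRel H₁.Adj] [DecidableRel H₂.Adj] :
    DecidableRel (joinGraph H₁ H₂).Adj := fun x y =>
  match x, y with
  | Sum.inl u, Sum.inl v => inferInstanceAs (Decidable (H₁.Adj u v))
  | Sum.inr u, Sum.inr v => inferInstanceAs (Decidable (H₂.Adj u v))
  | Sum.inl _, Sum.inr _ => inferInstanceAs (Decidable True)
  | Sum.inr _, Sum.inl _ => inferInstanceAs (Decidable True)

namespace Matrix.IsHermitian

variable {n : Type*} [Fintype n] [DecidableEq n] {A : Matrix n n ℝ} (hA : A.IsHermitian)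

theorem dotProduct_mulVec_eq_sum_eigenvalues (x : n → ℝ) :
    x ⬝ᵥ A *ᵥ x =
      ∑ i, hA.eigenvalues i * (star (hA.eigenvectorUnitary : Matrix n n ℝ) *ᵥ x) i ^ 2 := by
  conv_lhs => rw [hA.spectral_theorem, Unitary.conjStarAlgAut_apply]
  rw [← mulVec_mulVec, ← mulVec_mulVec, dotProduct_mulVec, ← mulVec_transpose,
    star_eq_conjTranspose, conjTranspose_eq_transpose_of_trivial]
  simp [mulVec_diagonal, dotProduct, sq, mul_left_comm]

theorem sum_sq_star_eigenvectorUnitary_mulVec (x : n → ℝ) :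
    ∑ i, (star (hA.eigenvectorUnitary : Matrix n n ℝ) *ᵥ x) i ^ 2 = x ⬝ᵥ x := by
  set U := hA.eigenvectorUnitary
  simp_rw [sq]
  change (star (U : Matrix n n ℝ) *ᵥ x) ⬝ᵥ (star (U : Matrix n n ℝ) *ᵥ x) = x ⬝ᵥ x
  rw [dotProduct_mulVec, ← mulVec_transpose, star_eq_conjTranspose,
    conjTranspose_eq_transpose_of_trivial, transpose_transpose, mulVec_mulVec,
    ← conjTranspose_eq_transpose_of_trivial, ← star_eq_conjTranspose,
    Unitary.mul_star_self_of_mem U.2, one_mulVec]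

theorem dotProduct_mulVec_le_iSup_eigenvalues_mul (x : n → ℝ) :
    x ⬝ᵥ A *ᵥ x ≤ (⨆ i, hA.eigenvalues i) * (x ⬝ᵥ x) := by
  rw [hA.dotProduct_mulVec_eq_sum_eigenvalues, ← hA.sum_sq_star_eigenvectorUnitary_mulVec,
    Finset.mul_sum]
  gcongr with i
  exact le_ciSup (Set.finite_range _).bddAbove i

theorem iInf_eigenvalues_mul_le_dotProduct_mulVec (x : n → ℝ) :
    (⨅ i, hA.eigenvalues i) * (x ⬝ᵥ x) ≤ x ⬝ᵥ A *ᵥ x := by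
  rw [hA.dotProduct_mulVec_eq_sum_eigenvalues, ← hA.sum_sq_star_eigenvectorUnitary_mulVec,
    Finset.mul_sum]
  gcongr with i
  exact ciInf_le (Set.finite_range _).bddBelow i

end Matrix.IsHermitian

theorem pvec_dotProduct_self (S : Finset V) : pvec S ⬝ᵥ pvec S = Fintype.card V := by
  have hsq (v : V) : pvec S v * pvec S v = 1 := by unfold pvec; split_ifs <;> norm_num
  simp [dotProduct, hsq]

theorem cutNum_eq_sum (G : SimpleGraph V) [DecidableRel G.Adj] (S : Finset V) :
    (cutNum G S : ℝ) = ∑ u, ∑ v, if G.Adj u v ∧ u ∈ S ∧ v ∉ S then 1 else 0 := by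
  rw [cutNum, Finset.card_filter, Fintype.sum_prod_type]
  push_cast
  rfl

theorem dotProduct_adjMatrix_mulVec_sub_pvec (G : SimpleGraph V) [DecidableRel G.Adj]
    (S : Finset V) :
    (fun _ => 1) ⬝ᵥ G.adjMatrix ℝ *ᵥ (fun _ => 1) - pvec S ⬝ᵥ G.adjMatrix ℝ *ᵥ pvec S
      = 4 * cutNum G S := by
  have hcross (u v : V) :
      (if G.Adj u v then 1 else 0) - pvec S u * ((if G.Adj u v then 1 else 0) * pvec S v)
        = 2 * (if G.Adj u v ∧ u ∈ S ∧ v ∉ S then 1 else 0)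
          + 2 * (if G.Adj v u ∧ v ∈ S ∧ u ∉ S then (1 : ℝ) else 0) := by
    simp only [G.adj_comm v u]
    unfold pvec
    split_ifs <;> simp_all <;> norm_num
  calc _ = ∑ u, ∑ v, (2 * (if G.Adj u v ∧ u ∈ S ∧ v ∉ S then 1 else 0)
          + 2 * (if G.Adj v u ∧ v ∈ S ∧ u ∉ S then (1 : ℝ) else 0)) := by
        simp only [dotProduct, mulVec, SimpleGraph.adjMatrix_apply, ← hcross, one_mul, mul_one,
          Finset.mul_sum, ← Finset.sum_sub_distrib]
    _ = 4 * cutNum G S := by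
        rw [cutNum_eq_sum]
        simp only [Finset.sum_add_distrib, ← Finset.mul_sum]
        rw [Finset.sum_comm (f := fun u v => if G.Adj v u ∧ v ∈ S ∧ u ∉ S then (1 : ℝ) else 0)]
        ring

theorem four_mul_cutNum_le_card_mul_spread (G : SimpleGraph V) [DecidableRel G.Adj]
    (S : Finset V) :
    4 * (cutNum G S : ℝ) ≤ Fintype.card V *
      ((⨆ i, (isHermitian_adj G).eigenvalues i) - (⨅ i, (isHermitian_adj G).eigenvalues i)) := by
  have hA := isHermitian_adj G
  have hmax := hA.dotProduct_mulVec_le_iSup_eigenvalues_mul (fun _ => 1)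
  have hmin := hA.iInf_eigenvalues_mul_le_dotProduct_mulVec (pvec S)
  have hone : (fun _ : V => (1 : ℝ)) ⬝ᵥ (fun _ => 1) = Fintype.card V := by simp [dotProduct]
  rw [hone] at hmax
  rw [pvec_dotProduct_self] at hmin
  linarith [dotProduct_adjMatrix_mulVec_sub_pvec G S]

/-- `mcut(G) ≤ (n/4)·s_A(G)` where `s_A` is the adjacency spread. -/
theorem stmt5 (G : SimpleGraph V) [DecidableRel G.Adj] :
    (mcut G : ℝ) ≤ (Fintype.card V : ℝ) / 4 * ((⨆ i, (isHermitian_adj G).eigenvalues i) - (⨅ i, (isHermitian_adj G).eigenvalues i)) := by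
  obtain ⟨S, -, hS⟩ := Finset.exists_mem_eq_sup Finset.univ Finset.univ_nonempty (cutNum G)
  rw [mcut, hS]
  linarith [four_mul_cutNum_le_card_mul_spread G S]
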